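/- Let q be a power of an odd prime, let c ∈ F_q be nonzero (where F_q is viewed as the subfield of F_{q²} fixed by x ↦ x^q), and let S = {β ∈ F_{q²} : β^q + β = c}. Then S has exactly q elements, every β ∈ S is nonzero, and Σ_{β ∈ S} β^{q−1} = 1. -/

import Mathlib

/-!
The map `x ↦ x ^ q + x` is additive, its image consists of fixed points of `x ↦ x ^ q`, and its
kernel consists of roots of `X ^ q + X`; both sets have at most `q` elements, and `|F| = q²`
forces equality, so every fiber over a fixed point has `q` elements. On the fiber `S` over `c`,
`β ^ (q - 1) = c / β - 1`, and the inverses of the elements of `S` are the `q` roots of the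
reversed polynomial `X ^ q - c⁻¹ X ^ (q - 1) - c⁻¹`, whose sum is `c⁻¹` by Vieta. Since `q = 0`
in `F`, the sum is `c · c⁻¹ = 1`.
-/

open Polynomial Finset

theorem Polynomial.Monic.sum_eq_neg_nextCoeff_of_card_eq_natDegree {K : Type*} [Field K]
    {P : K[X]} (hP : P.Monic) {s : Finset K} (hs : ∀ x ∈ s, P.eval x = 0)
    (hcard : #s = P.natDegree) : ∑ x ∈ s, x = -P.nextCoeff := by
  have hroots : P.roots = s.val := roots_eq_of_natDegree_le_card_of_ne_zero hs hcard.ge hP.ne_zero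
  have hsplit : P.Splits := splits_iff_card_roots.mpr (by rw [hroots, ← hcard]; rfl)
  rw [hsplit.nextCoeff_eq_neg_sum_roots_of_monic hP, hroots, neg_neg, sum_eq_multiset_sum,
    Multiset.map_id']

theorem Polynomial.card_filter_eval_eq_zero_le {R : Type*} [CommRing R] [IsDomain R] [Fintype R]
    [DecidableEq R] {P : R[X]} (hP : P ≠ 0) : #{x | P.eval x = 0} ≤ P.natDegree :=
  card_le_degree_of_subset_roots fun _ hx ↦ (mem_roots hP).mpr (mem_filter.mp hx).2

theorem AddMonoidHom.card_eq_card_image_mul_card_ker {G H : Type*} [AddGroup G] [Fintype G]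
    [AddMonoid H] [DecidableEq H] (f : G →+ H) :
    Fintype.card G = #(univ.image f) * #{g | f g = 0} := by
  rw [← card_univ, card_eq_sum_card_image f univ, sum_const_nat fun y hy ↦ ?_]
  obtain ⟨x, -, rfl⟩ := mem_image.mp hy
  exact card_fiber_eq_of_mem_range f ⟨x, rfl⟩ ⟨0, map_zero f⟩

section SumOverRoots

variable {K : Type*} [Field K] {n : ℕ} {c : K} {s : Finset K}

theorem sum_inv_eq_inv_of_pow_add_self_eq (hn : 2 ≤ n) (hc : c ≠ 0)
    (hs : ∀ β ∈ s, β ^ n + β = c) (hcard : #s = n) : ∑ β ∈ s, β⁻¹ = c⁻¹ := by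
  classical
  obtain ⟨m, rfl⟩ : ∃ m, n = m + 1 := ⟨n - 1, by omega⟩
  set Q : K[X] := X ^ (m + 1) - C c⁻¹ * X ^ m - C c⁻¹
  have hdeg : Q.natDegree = m + 1 := by unfold Q; compute_degree!
  have hmonic : Q.Monic := by unfold Q; monicity!
  have hnext : Q.nextCoeff = -c⁻¹ := by
    rw [nextCoeff_of_natDegree_pos (by omega), hdeg]
    simp [Q, coeff_C, show m ≠ 0 by omega]
  have hroot : ∀ γ ∈ s.image (·⁻¹), Q.eval γ = 0 := by
    simp only [mem_image]
    rintro _ ⟨β, hβ, rfl⟩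
    have hβ0 : β ≠ 0 := by rintro rfl; simp [← hs 0 hβ] at hc
    simp only [Q, eval_sub, eval_pow, eval_X, eval_mul, eval_C, inv_pow]
    field_simp
    linear_combination (-β ^ m) * hs β hβ
  have := hmonic.sum_eq_neg_nextCoeff_of_card_eq_natDegree hroot
    (by rw [card_image_of_injective _ inv_injective, hcard, hdeg])
  rwa [sum_image fun x _ y _ h ↦ inv_injective h, hnext, neg_neg] at this

theorem sum_pow_pred_eq_one_of_pow_add_self_eq (hn : 2 ≤ n) (hnK : (n : K) = 0) (hc : c ≠ 0)
    (hs : ∀ β ∈ s, β ^ n + β = c) (hcard : #s = n) : ∑ β ∈ s, β ^ (n - 1) = 1 := by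
  have hterm : ∀ β ∈ s, β ^ (n - 1) = c * β⁻¹ - 1 := by
    intro β hβ
    have hβ0 : β ≠ 0 := by rintro rfl; simp [← hs 0 hβ, show n ≠ 0 by omega] at hc
    calc β ^ (n - 1) = β ^ n * β⁻¹ := by rw [pow_sub₀ β hβ0 (by omega), pow_one]
      _ = c * β⁻¹ - 1 := by rw [← hs β hβ, add_mul, mul_inv_cancel₀ hβ0, add_sub_cancel_right]
  rw [sum_congr rfl hterm, sum_sub_distrib, ← mul_sum,
    sum_inv_eq_inv_of_pow_add_self_eq hn hc hs hcard, mul_inv_cancel₀ hc, sum_const, hcard,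
    nsmul_one, hnK, sub_zero]

end SumOverRoots

section TraceFiber

variable {F : Type*} [Field F] [Fintype F] {q : ℕ}

theorem two_le_of_card_eq_sq (hcard : Fintype.card F = q ^ 2) : 2 ≤ q := by
  have := hcard ▸ Fintype.one_lt_card (α := F)
  nlinarith

variable [DecidableEq F]

theorem card_filter_pow_add_mul_eq_zero_le (hq : 2 ≤ q) (a : F) :
    #{x : F | x ^ q + a * x = 0} ≤ q := by
  have hlt : (C a * X).degree < ((X : F[X]) ^ q).degree := by
    rw [degree_X_pow]
    exact (degree_C_mul_X_le a).trans_lt (by exact_mod_cast hq)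
  have hmonic : ((X : F[X]) ^ q + C a * X).Monic := (monic_X_pow q).add_of_left hlt
  have hdeg : ((X : F[X]) ^ q + C a * X).natDegree = q := by
    rw [natDegree_add_eq_left_of_degree_lt hlt, natDegree_X_pow]
  simpa [hdeg] using card_filter_eval_eq_zero_le hmonic.ne_zero

theorem card_filter_pow_add_self_eq (hadd : ∀ a b : F, (a + b) ^ q = a ^ q + b ^ q)
    (hcard : Fintype.card F = q ^ 2) {c : F} (hc : c ^ q = c) : #{β : F | β ^ q + β = c} = q := by
  have hq := two_le_of_card_eq_sq hcard
  let T : F →+ F := AddMonoidHom.mk' (fun x ↦ x ^ q + x) fun a b ↦ by rw [hadd]; ring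
  have hfixed : univ.image T ⊆ ({y | y ^ q = y} : Finset F) := by
    simp only [subset_iff, mem_image, mem_filter, mem_univ, true_and]
    rintro _ ⟨x, rfl⟩
    show (x ^ q + x) ^ q = x ^ q + x
    rw [hadd, ← pow_mul, ← sq, ← hcard, FiniteField.pow_card, add_comm]
  have hfixed_le : #{y : F | y ^ q = y} ≤ q := by
    simpa [← sub_eq_add_neg, sub_eq_zero] using card_filter_pow_add_mul_eq_zero_le hq (-1 : F)
  have hker_le : #{x | T x = 0} ≤ q := by
    simpa [T] using card_filter_pow_add_mul_eq_zero_le hq (1 : F)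
  have hcount := hcard ▸ T.card_eq_card_image_mul_card_ker
  have himage_card : #(univ.image T) = q := by nlinarith [card_le_card hfixed]
  have hker_card : #{x | T x = 0} = q := by nlinarith [card_le_card hfixed]
  have hc_mem : c ∈ univ.image T :=
    eq_of_subset_of_card_le hfixed (by omega) ▸ mem_filter.mpr ⟨mem_univ c, hc⟩
  exact (AddMonoidHom.card_fiber_eq_of_mem_range T (by simpa using hc_mem) ⟨0, map_zero T⟩).trans
    hker_card

end TraceFiber

theorem trace_fiber_sum_general {F : Type*} [Field F] [Fintype F] [DecidableEq F]
    {p e q : ℕ} (hp : p.Prime) (hq : q = p ^ e)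
    (hcard : Fintype.card F = q ^ 2)
    (c : F) (hc : c ≠ 0) (hcfix : c ^ q = c) :
    (Finset.univ.filter fun β : F => β ^ q + β = c).card = q ∧
      (∀ β ∈ Finset.univ.filter fun β : F => β ^ q + β = c, β ≠ 0) ∧
      ∑ β ∈ Finset.univ.filter (fun β : F => β ^ q + β = c), β ^ (q - 1) = 1 := by
  have := Fact.mk hp
  have : CharP F p := charP_of_card_eq_prime_pow (by rw [hcard, hq, ← pow_mul])
  have hadd (a b : F) : (a + b) ^ q = a ^ q + b ^ q := hq ▸ add_pow_char_pow a b p e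
  have hq2 := two_le_of_card_eq_sq hcard
  have hqF : (q : F) = 0 := by simpa [hcard] using FiniteField.cast_card_eq_zero F
  have hS := card_filter_pow_add_self_eq hadd hcard hcfix
  refine ⟨hS, ?_, sum_pow_pred_eq_one_of_pow_add_self_eq hq2 hqF hc (by simp) hS⟩
  rintro β hβ rfl
  simp [zero_pow (show q ≠ 0 by omega), eq_comm, hc] at hβ

/-- Let `q` be a power of an odd prime, `F` a finite field of cardinality `q²`, and
`c ∈ F` a nonzero element of the subfield fixed by `x ↦ x^q` (i.e. `c^q = c`). Then
the set `S = {β : β^q + β = c}` has exactly `q` elements, every `β ∈ S` is nonzero,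
and `∑_{β ∈ S} β^{q-1} = 1`. -/
theorem trace_fiber_sum {F : Type*} [Field F] [Fintype F] [DecidableEq F]
    {p e q : ℕ} (hp : p.Prime) (hodd : Odd p) (he : 1 ≤ e) (hq : q = p ^ e)
    (hcard : Fintype.card F = q ^ 2)
    (c : F) (hc : c ≠ 0) (hcfix : c ^ q = c) :
    (Finset.univ.filter fun β : F => β ^ q + β = c).card = q ∧
      (∀ β ∈ Finset.univ.filter fun β : F => β ^ q + β = c, β ≠ 0) ∧
      ∑ β ∈ Finset.univ.filter (fun β : F => β ^ q + β = c), β ^ (q - 1) = 1 :=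
  trace_fiber_sum_general hp hq hcard c hc hcfix
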